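/- For every integer C ≥ 2 there exists an integer N such that for all n ≥ N the following holds: there is no tuple (Σ, φ, τ, a, d) where Σ is a finite alphabet with |Σ| ≤ C, φ is an expanding morphism over Σ with 2 ≤ |φ(x)| ≤ C for every symbol x, τ : Σ → {0,1} is a coding, a ∈ Σ is a symbol, and d ≥ 0 is an integer, such that the string 0^n·1·0^{2^n} (n zeros, a one, then 2^n zeros) is a prefix of τ(φ^d(a)). In other words, no family of expanding coded morphisms of bounded size can generate all strings 0^n 1 0^{2^n}. -/

import Mathlib

/-!
Let `g x` be the first letter of `φ(x)`, so that `a, g a, g² a, …` is the leftmost path of the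
derivation tree of `φ^d(a)` and `τ(φ^(d-j)(g^j a))` is a prefix of `τ(φ^d(a))`. If that subtree
word contains no `1`, its length, at least `2^(d-j)`, is at most the position `n` of the first `1`;
if it does contain one, `n` is smaller than its length, at most `C^(d-j)`.

Whether `φ^h(x)` contains a `1` is the value at `x` of the `h`-th iterate of
`p ↦ (x ↦ ∃ y ∈ φ(x), p y)` on `α → Bool`, started at `τ`. This orbit and the path `g^j a` are
eventually periodic with preperiods and periods bounded in terms of `C`, so if some subtree on the
path above height `2^|α|` has no `1`, one already does at a depth `j < C + C·2^C`. Hence either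
`n < C^(2^C)` or `2^(d - C - C·2^C) ≤ n`; as `2^n ≤ C^d` also gives `n ≤ C d`, the latter bounds
`d` and hence `n` too.
-/

open Filter Function

namespace List

variable {α β : Type*}

theorem iterate_flatMap_append (f : α → List α) (h : ℕ) (l₁ l₂ : List α) :
    (flatMap f)^[h] (l₁ ++ l₂) = (flatMap f)^[h] l₁ ++ (flatMap f)^[h] l₂ := by
  induction h generalizing l₁ l₂ with
  | zero => rfl
  | succ h ih => simp only [iterate_succ_apply, flatMap_append, ih]

theorem IsPrefix.iterate_flatMap {l₁ l₂ : List α} (hl : l₁ <+: l₂) (f : α → List α) (h : ℕ) :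
    (flatMap f)^[h] l₁ <+: (flatMap f)^[h] l₂ := by
  obtain ⟨t, rfl⟩ := hl
  rw [iterate_flatMap_append]
  exact prefix_append _ _

theorem length_flatMap_le_mul {f : α → List β} {C : ℕ} (hf : ∀ x, (f x).length ≤ C)
    (l : List α) : (l.flatMap f).length ≤ C * l.length := by
  induction l with
  | nil => simp
  | cons x l ih => simp only [flatMap_cons, length_append, length_cons]; nlinarith [hf x]

theorem mul_length_le_length_flatMap {f : α → List β} {m : ℕ} (hf : ∀ x, m ≤ (f x).length)
    (l : List α) : m * l.length ≤ (l.flatMap f).length := by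
  induction l with
  | nil => simp
  | cons x l ih => simp only [flatMap_cons, length_append, length_cons]; nlinarith [hf x]

theorem length_iterate_flatMap_le {f : α → List α} {C : ℕ} (hf : ∀ x, (f x).length ≤ C)
    (h : ℕ) (l : List α) : ((flatMap f)^[h] l).length ≤ C ^ h * l.length := by
  induction h generalizing l with
  | zero => simp
  | succ h ih =>
    rw [iterate_succ_apply, pow_succ, mul_assoc]
    exact (ih _).trans (Nat.mul_le_mul_left _ (length_flatMap_le_mul hf l))

theorem pow_mul_length_le_length_iterate_flatMap {f : α → List α} {m : ℕ}
    (hf : ∀ x, m ≤ (f x).length) (h : ℕ) (l : List α) :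
    m ^ h * l.length ≤ ((flatMap f)^[h] l).length := by
  induction h generalizing l with
  | zero => simp
  | succ h ih =>
    rw [iterate_succ_apply, pow_succ, mul_assoc]
    exact (Nat.mul_le_mul_left _ (mul_length_le_length_flatMap hf l)).trans (ih _)

def anyImage (f : α → List α) (p : α → Bool) (x : α) : Bool := (f x).any p

theorem any_iterate_flatMap (f : α → List α) (p : α → Bool) (h : ℕ) (l : List α) :
    ((flatMap f)^[h] l).any p = l.any ((anyImage f)^[h] p) := by
  induction h generalizing l with
  | zero => rfl
  | succ h ih =>
    rw [iterate_succ_apply, ih, any_flatMap, iterate_succ_apply']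
    rfl

theorem true_mem_map_iterate_flatMap_singleton (f : α → List α) (τ : α → Bool) (h : ℕ) (x : α) :
    true ∈ ((flatMap f)^[h] [x]).map τ ↔ (anyImage f)^[h] τ x = true := by
  have := any_iterate_flatMap f τ h [x]
  simp only [any_cons, any_nil, Bool.or_false] at this
  rw [← this]
  simp [any_eq_true]

theorem iterate_flatMap_headD_prefix {f : α → List α} (hf : ∀ x, f x ≠ []) (h k : ℕ) (x : α) :
    (flatMap f)^[h] [(fun y => (f y).headD y)^[k] x] <+: (flatMap f)^[h + k] [x] := by
  induction k generalizing h with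
  | zero => exact prefix_rfl
  | succ k ih =>
    refine IsPrefix.trans ?_ (add_right_comm h 1 k ▸ ih (h + 1))
    rw [iterate_succ_apply', iterate_succ_apply, flatMap_singleton]
    generalize (fun y => (f y).headD y)^[k] x = y
    obtain ⟨z, t, hzt⟩ := exists_cons_of_ne_nil (hf y)
    rw [hzt, headD_cons]
    exact (prefix_cons_inj z |>.mpr nil_prefix).iterate_flatMap f h

theorem mem_iff_lt_length_of_prefix {a b : β} (hab : a ≠ b) {n : ℕ} {u w : List β}
    (hw : replicate n a ++ [b] <+: w) (hu : u <+: w) : b ∈ u ↔ n < u.length := by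
  constructor
  · intro hb
    by_contra! hlen
    have hu' : u <+: replicate n a ++ [b] := prefix_of_prefix_length_le hu hw (by simp; omega)
    have : u <+: replicate n a :=
      prefix_of_prefix_length_le hu' (prefix_append _ _) (by simpa using hlen)
    exact hab (eq_of_mem_replicate (this.mem hb)).symm
  · intro hlen
    exact (prefix_of_prefix_length_le hw hu (by simpa using hlen)).mem (by simp)

end List

theorem Nat.exists_lt_add_of_forall_add_imp {P : ℕ → Prop} {i M : ℕ}
    (hM : 0 < M) (hP : ∀ j, i ≤ j → P (j + M) → P j) {j : ℕ} (hj : P j) : ∃ j' < i + M, P j' := by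
  induction j using Nat.strong_induction_on with
  | _ j ih =>
    by_cases hlt : j < i + M
    · exact ⟨j, hlt, hj⟩
    · refine ih (j - M) (by omega) (hP _ (by omega) ?_)
      rwa [Nat.sub_add_cancel (by omega)]

namespace Function

variable {α β : Type*}

theorem exists_isPeriodicPt_iterate [Fintype α] (g : α → α) (x : α) :
    ∃ i q, 0 < q ∧ i + q ≤ Fintype.card α ∧ IsPeriodicPt g q (g^[i] x) := by
  obtain ⟨k₁, k₂, hne, heq⟩ :=
    Fintype.exists_ne_map_eq_of_card_lt (fun k : Fin (Fintype.card α + 1) => g^[k] x) (by simp)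
  wlog hlt : k₁ < k₂ generalizing k₁ k₂
  · exact this k₂ k₁ hne.symm heq.symm (lt_of_le_of_ne (not_lt.mp hlt) hne.symm)
  refine ⟨k₁, k₂ - k₁, by omega, by omega, ?_⟩
  rw [IsPeriodicPt, IsFixedPt, ← iterate_add_apply, Nat.sub_add_cancel hlt.le]
  exact heq.symm

theorem IsPeriodicPt.iterate_of_le {g : α → α} {x : α} {q i j : ℕ}
    (hg : IsPeriodicPt g q (g^[i] x)) (hij : i ≤ j) : IsPeriodicPt g q (g^[j] x) := by
  obtain ⟨k, rfl⟩ := Nat.exists_eq_add_of_le hij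
  rw [add_comm, iterate_add_apply]
  exact hg.apply_iterate k

theorem exists_lt_of_iterate_iterate_sub [Fintype α] [Fintype β] (g : α → α) (Φ : β → β)
    (a : α) (s : β) (P : α → β → Prop) {d j : ℕ} (hj : j ≤ d - Fintype.card β)
    (hP : P (g^[j] a) (Φ^[d - j] s)) :
    ∃ j' < Fintype.card α + Fintype.card α * Fintype.card β,
      j' ≤ d - Fintype.card β ∧ P (g^[j'] a) (Φ^[d - j'] s) := by
  obtain ⟨i₁, q₁, hq₁, hiq₁, hΦ⟩ := exists_isPeriodicPt_iterate Φ s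
  obtain ⟨i₂, q₂, hq₂, hiq₂, hg⟩ := exists_isPeriodicPt_iterate g a
  have hM : 0 < q₂ * q₁ := Nat.mul_pos hq₂ hq₁
  have hstep : ∀ j, i₂ ≤ j → j + q₂ * q₁ ≤ d - Fintype.card β ∧
      P (g^[j + q₂ * q₁] a) (Φ^[d - (j + q₂ * q₁)] s) →
      j ≤ d - Fintype.card β ∧ P (g^[j] a) (Φ^[d - j] s) := by
    rintro j hij ⟨hjd, hPj⟩
    have hgj : g^[j + q₂ * q₁] a = g^[j] a := by
      rw [add_comm, iterate_add_apply]
      exact ((hg.iterate_of_le hij).mul_const q₁).eq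
    have hΦj : Φ^[d - j] s = Φ^[d - (j + q₂ * q₁)] s := by
      rw [show d - j = q₂ * q₁ + (d - (j + q₂ * q₁)) by omega, iterate_add_apply]
      exact ((hΦ.iterate_of_le (by omega)).const_mul q₂).eq
    exact ⟨by omega, hgj ▸ hΦj ▸ hPj⟩
  obtain ⟨j', hj'K, hj'⟩ := Nat.exists_lt_add_of_forall_add_imp
    (P := fun j => j ≤ d - Fintype.card β ∧ P (g^[j] a) (Φ^[d - j] s)) hM hstep ⟨hj, hP⟩
  refine ⟨j', lt_of_lt_of_le hj'K ?_, hj'⟩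
  gcongr <;> omega

end Function

theorem eventually_mul_add_lt_two_pow (A B : ℕ) : ∀ᶠ e in atTop, A * e + B < 2 ^ e := by
  have hc : (0 : ℝ) < 1 / (A + B + 1) := by positivity
  filter_upwards [(isLittleO_coe_const_pow_of_one_lt (R := ℝ) one_lt_two).def hc,
    eventually_ge_atTop 1] with e he he1
  rw [norm_natCast, norm_pow, Real.norm_two, div_mul_eq_mul_div, one_mul,
    le_div_iff₀ (by positivity)] at he
  have : (A + B + 1) * e ≤ 2 ^ e := by exact_mod_cast (mul_comm (e : ℝ) _ ▸ he)
  nlinarith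

open List

theorem lt_pow_or_two_pow_le_of_prefix {α : Type*} [Fintype α] {f : α → List α} {τ : α → Bool}
    {C : ℕ} (hcard : Fintype.card α ≤ C) (hf : ∀ x, 2 ≤ (f x).length ∧ (f x).length ≤ C)
    (a : α) {d n : ℕ} (hw : replicate n false ++ [true] <+: ((flatMap f)^[d] [a]).map τ) :
    n < C ^ 2 ^ C ∨ 2 ^ (d - (C + C * 2 ^ C)) ≤ n := by
  classical
  have hne : ∀ x, f x ≠ [] := fun x => ne_nil_of_length_pos (by have := (hf x).1; omega)
  set g : α → α := fun y => (f y).headD y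
  have hsubtree : ∀ j ≤ d, (anyImage f)^[d - j] τ (g^[j] a) = true ↔
      n < ((flatMap f)^[d - j] [g^[j] a]).length := by
    intro j hj
    have hpre := (iterate_flatMap_headD_prefix hne (d - j) j a).map τ
    rw [Nat.sub_add_cancel hj] at hpre
    rw [← true_mem_map_iterate_flatMap_singleton,
      mem_iff_lt_length_of_prefix Bool.false_ne_true hw hpre, length_map]
  have hcardFun : Fintype.card (α → Bool) ≤ 2 ^ C := by
    rw [Fintype.card_fun, Fintype.card_bool]
    exact Nat.pow_le_pow_right two_pos hcard
  by_cases hall : ∀ j ≤ d - Fintype.card (α → Bool), (anyImage f)^[d - j] τ (g^[j] a) = true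
  · left
    set j := d - Fintype.card (α → Bool) with hj
    calc n < ((flatMap f)^[d - j] [g^[j] a]).length :=
          (hsubtree j (Nat.sub_le _ _)).1 (hall j le_rfl)
      _ ≤ C ^ (d - j) * 1 := length_iterate_flatMap_le (fun x => (hf x).2) _ [_]
      _ ≤ C ^ 2 ^ C := by
        rw [mul_one]
        exact Nat.pow_le_pow_right (by have := (hf a).1.trans (hf a).2; omega) (by omega)
  · right
    push Not at hall
    obtain ⟨j₀, hj₀, hbad₀⟩ := hall
    obtain ⟨j, hjK, hjd, hbad⟩ := exists_lt_of_iterate_iterate_sub g (anyImage f) a τ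
      (fun x p => p x ≠ true) hj₀ hbad₀
    have hjK' : j < C + C * 2 ^ C := hjK.trans_le (by gcongr)
    calc 2 ^ (d - (C + C * 2 ^ C)) ≤ 2 ^ (d - j) * 1 := by
          rw [mul_one]; exact Nat.pow_le_pow_right two_pos (by omega)
      _ ≤ ((flatMap f)^[d - j] [g^[j] a]).length :=
          pow_mul_length_le_length_iterate_flatMap (fun x => (hf x).1) _ [_]
      _ ≤ n := not_lt.1 fun h => hbad ((hsubtree j (by omega)).2 h)

theorem stmt14_general (C : ℕ) :
    ∃ N : ℕ, ∀ n : ℕ, N ≤ n →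
      ¬ ∃ (α : Type) (_ : Fintype α) (f : α → List α) (τ : α → Bool) (a : α)
          (d : ℕ),
        Fintype.card α ≤ C ∧ (∀ x : α, 2 ≤ (f x).length ∧ (f x).length ≤ C) ∧
        (List.replicate n false ++ [true] ++ List.replicate (2 ^ n) false) <+:
          ((fun l => l.flatMap f)^[d] [a]).map τ := by
  obtain ⟨E, hE⟩ :=
    (eventually_mul_add_lt_two_pow C (C * (C + C * 2 ^ C))).exists_forall_of_atTop
  refine ⟨C ^ 2 ^ C + C * (E + (C + C * 2 ^ C)) + 1,
    fun n hn ⟨α, _, f, τ, a, d, hcard, hf, hw⟩ => ?_⟩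
  change _ <+: ((flatMap f)^[d] [a]).map τ at hw
  have hnd : n ≤ C * d := by
    have hlen : 2 ^ n ≤ C ^ d := by
      have hw_len := hw.length_le
      have hφ_len := length_iterate_flatMap_le (fun x => (hf x).2) d [a]
      simp only [length_append, length_replicate, length_singleton, length_map] at hw_len hφ_len
      omega
    have : C ^ d ≤ 2 ^ (C * d) := by
      rw [pow_mul]; exact Nat.pow_le_pow_left Nat.lt_two_pow_self.le d
    exact (Nat.pow_le_pow_iff_right one_lt_two).1 (hlen.trans this)
  rcases lt_pow_or_two_pow_le_of_prefix hcard hf a ((prefix_append _ _).trans hw) with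
    hsmall | hlarge
  · omega
  · set K := C + C * 2 ^ C
    have hdE : d < E + K := by
      by_contra! hd
      have hexp := hE (d - K) (by omega)
      have hsplit : C * (d - K) + C * K = C * d := by
        rw [← mul_add, Nat.sub_add_cancel (by omega)]
      omega
    have : C * d ≤ C * (E + K) := Nat.mul_le_mul_left _ hdE.le
    omega

/-- for every C ≥ 2 there is an N such that for all n ≥ N there
    is no tuple (Σ, φ, τ, a, d) with |Σ| ≤ C, φ an expanding morphism over Σ
    with 2 ≤ |φ(x)| ≤ C for every symbol x, τ : Σ → {0,1} a coding, a ∈ Σ and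
    d ≥ 0, such that 0^n·1·0^{2^n} is a prefix of τ(φ^d(a)).
    (Bits are modeled by `Bool`, with 0 = `false` and 1 = `true`.) -/
theorem stmt14 (C : ℕ) (hC : 2 ≤ C) :
    ∃ N : ℕ, ∀ n : ℕ, N ≤ n →
      ¬ ∃ (α : Type) (_ : Fintype α) (f : α → List α) (τ : α → Bool) (a : α)
          (d : ℕ),
        Fintype.card α ≤ C ∧ (∀ x : α, 2 ≤ (f x).length ∧ (f x).length ≤ C) ∧
        (List.replicate n false ++ [true] ++ List.replicate (2 ^ n) false) <+:
          ((fun l => l.flatMap f)^[d] [a]).map τ :=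
  stmt14_general C
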